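/- Let Q be a unital quantale and let φ : (A,𝔸) ⇸ (B,𝔹) and ψ : (B,𝔹) ⇸ (A,𝔸) be Q-distributors between Q-preordered sets. Then φ ⊣ ψ in the quantaloid of Q-distributors, i.e., 𝔸(x,x') ≤ ⨆_{y∈B} ψ(y,x')&φ(x,y) for all x,x' ∈ A and ⨆_{x∈A} φ(x,y')&ψ(y,x) ≤ 𝔹(y,y') for all y,y' ∈ B, if and only if φ* = ψ_*, i.e., for every contravariant presheaf λ on 𝔹 and every x ∈ A, ⨆_{y∈B} λ(y)&φ(x,y) = ⨅_{y∈B} λ(y)/ψ(y,x). -/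
import Mathlib


universe u

/-- A unital quantale: a complete lattice with a monoid structure whose multiplication
preserves arbitrary suprema in each variable. -/
class UnitalQuantale (Q : Type u) extends CompleteLattice Q, Monoid Q where
  mul_sSup : ∀ (a : Q) (S : Set Q), a * sSup S = ⨆ b ∈ S, a * b
  sSup_mul : ∀ (S : Set Q) (a : Q), sSup S * a = ⨆ b ∈ S, b * a

variable {Q : Type u} [UnitalQuantale Q]

/-- The left residual `b / a = ⨆ {c | c * a ≤ b}`. -/
def qdivr (b a : Q) : Q := sSup {c : Q | c * a ≤ b}

/-- The right residual `a ∖ b = ⨆ {c | a * c ≤ b}`. -/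
def qdivl (a b : Q) : Q := sSup {c : Q | a * c ≤ b}

lemma qmul_iSup {ι : Sort*} (a : Q) (f : ι → Q) : a * (⨆ i, f i) = ⨆ i, a * f i := by
  rw [iSup, UnitalQuantale.mul_sSup, iSup_range]

lemma qiSup_mul {ι : Sort*} (f : ι → Q) (a : Q) : (⨆ i, f i) * a = ⨆ i, f i * a := by
  rw [iSup, UnitalQuantale.sSup_mul, iSup_range]

lemma qmul_le_left (a : Q) {b c : Q} (h : b ≤ c) : a * b ≤ a * c := by
  have : a * c = a * sSup {b, c} := by rw [sSup_pair, sup_eq_right.2 h]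
  rw [this, UnitalQuantale.mul_sSup]
  exact le_iSup₂ (f := fun x _ => a * x) b (Set.mem_insert b {c})

lemma qmul_le_right {a b : Q} (c : Q) (h : a ≤ b) : a * c ≤ b * c := by
  have : b * c = sSup {a, b} * c := by rw [sSup_pair, sup_eq_right.2 h]
  rw [this, UnitalQuantale.sSup_mul]
  exact le_iSup₂ (f := fun x _ => x * c) a (Set.mem_insert a {b})

lemma qle_divr {b a c : Q} (h : c * a ≤ b) : c ≤ qdivr b a := le_sSup h

lemma qdivr_mul_le (b a : Q) : qdivr b a * a ≤ b := by
  rw [qdivr, UnitalQuantale.sSup_mul]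
  exact iSup₂_le fun c hc => hc

/-- A pair of `Q`-distributors `φ ⊣ ψ` is an adjunction in the quantaloid of
`Q`-distributors iff `φ* = ψ_*` (part of Proposition `adjoint_distributor_Kan`). -/
theorem qdistributor_adjoint_iff_kan {A B : Type*}
    (𝔸 : A → A → Q) (𝔹 : B → B → Q)
    (hArefl : ∀ x, (1 : Q) ≤ 𝔸 x x)
    (hAtrans : ∀ x y z, 𝔸 y z * 𝔸 x y ≤ 𝔸 x z)
    (hBrefl : ∀ y, (1 : Q) ≤ 𝔹 y y)
    (hBtrans : ∀ x y z, 𝔹 y z * 𝔹 x y ≤ 𝔹 x z)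
    (φ : A → B → Q)
    (hφ1 : ∀ x y y', 𝔹 y y' * φ x y ≤ φ x y')
    (hφ2 : ∀ x x' y, φ x' y * 𝔸 x x' ≤ φ x y)
    (ψ : B → A → Q)
    (hψ1 : ∀ y x x', 𝔸 x x' * ψ y x ≤ ψ y x')
    (hψ2 : ∀ y y' x, ψ y' x * 𝔹 y y' ≤ ψ y x) :
    ((∀ x x' : A, 𝔸 x x' ≤ ⨆ y : B, ψ y x' * φ x y) ∧
      (∀ y y' : B, (⨆ x : A, φ x y' * ψ y x) ≤ 𝔹 y y')) ↔
    (∀ lam : B → Q, (∀ y y', lam y' * 𝔹 y y' ≤ lam y) →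
      ∀ x : A, (⨆ y, lam y * φ x y) = ⨅ y, qdivr (lam y) (ψ y x)) := by
  constructor
  · rintro ⟨hη, hε⟩ lam hlam x
    apply le_antisymm
    · refine iSup_le fun y => le_iInf fun y' => qle_divr ?_
      calc lam y * φ x y * ψ y' x = lam y * (φ x y * ψ y' x) := mul_assoc _ _ _
        _ ≤ lam y * 𝔹 y' y :=
            qmul_le_left _ (le_trans (le_iSup (fun z => φ z y * ψ y' z) x) (hε y' y))
        _ ≤ lam y' := hlam y' y
    · set m := ⨅ y, qdivr (lam y) (ψ y x) with hm
      calc m = m * 1 := (mul_one m).symm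
        _ ≤ m * 𝔸 x x := qmul_le_left m (hArefl x)
        _ ≤ m * ⨆ y, ψ y x * φ x y := qmul_le_left m (hη x x)
        _ = ⨆ y, m * (ψ y x * φ x y) := qmul_iSup m _
        _ ≤ ⨆ y, lam y * φ x y := by
            refine iSup_mono fun y => ?_
            rw [← mul_assoc]
            exact qmul_le_right _
              (le_trans (qmul_le_right _ (iInf_le _ y)) (qdivr_mul_le _ _))
  · intro h
    constructor
    · intro x x'
      have hk := h (fun y => ψ y x') (fun y y' => hψ2 y y' x') x
      rw [hk]
      exact le_iInf fun y => qle_divr (hψ1 y x x')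
    · intro y y'
      refine iSup_le fun x => ?_
      have hk := h (fun z => 𝔹 z y') (fun z z' => hBtrans z z' y') x
      have h1 : φ x y' ≤ ⨆ z, 𝔹 z y' * φ x z :=
        calc φ x y' = 1 * φ x y' := (one_mul _).symm
          _ ≤ 𝔹 y' y' * φ x y' := qmul_le_right _ (hBrefl y')
          _ ≤ ⨆ z, 𝔹 z y' * φ x z := le_iSup (fun z => 𝔹 z y' * φ x z) y'
      have h2 : φ x y' ≤ qdivr (𝔹 y y') (ψ y x) := by
        refine le_trans h1 ?_
        rw [hk]
        exact iInf_le _ y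
      calc φ x y' * ψ y x ≤ qdivr (𝔹 y y') (ψ y x) * ψ y x := qmul_le_right _ h2
        _ ≤ 𝔹 y y' := qdivr_mul_le _ _
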